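/- Let ψ₂(α) = arcsin(2ρ/L(α)) where L(α) = √((c_x + 2ρ·cos α)² + (c_y + 2ρ·sin α + ρ)²) and L(α) > 2ρ for all α in a neighborhood. Then ψ₂'(α) = −tan(ψ₂(α))·sin(ψ₂(α))·sin(ψ₁(α) − α), where ψ₁(α) = arctan((c_y + 2ρ·sin α + ρ)/(c_x + 2ρ·cos α)), provided c_x + 2ρ·cos α > 0. -/

import Mathlib

/-!
Write `L` for the distance from the origin to the point `P(α) = (c_x + 2ρ cos α, c_y + ρ + 2ρ sin α)`
of a circle of radius `2ρ`, and `ψ₁` for the polar angle of `P(α)`. Since `P'(α)` has length `2ρ`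
and direction `α + π/2`, the radial speed is `L' = 2ρ sin (ψ₁ - α)`. Differentiating
`sin ψ₂ = 2ρ / L` gives `ψ₂' = -tan ψ₂ · L' / L`, and `L' / L = sin ψ₂ · sin (ψ₁ - α)`.
-/

open Real

namespace Real

lemma sin_arctan_div {u : ℝ} (v : ℝ) (hu : 0 < u) : sin (arctan (v / u)) = v / √(u ^ 2 + v ^ 2) := by
  rw [sin_arctan, show 1 + (v / u) ^ 2 = (u ^ 2 + v ^ 2) / u ^ 2 by field_simp,
    sqrt_div' _ (sq_nonneg u), sqrt_sq hu.le]
  field_simp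

lemma cos_arctan_div {u : ℝ} (v : ℝ) (hu : 0 < u) : cos (arctan (v / u)) = u / √(u ^ 2 + v ^ 2) := by
  rw [cos_arctan, show 1 + (v / u) ^ 2 = (u ^ 2 + v ^ 2) / u ^ 2 by field_simp,
    sqrt_div' _ (sq_nonneg u), sqrt_sq hu.le]
  field_simp

end Real

lemma hasDerivAt_sqrt_circle (a b r x : ℝ) (h : 0 < a + r * cos x) :
    HasDerivAt (fun t => √((a + r * cos t) ^ 2 + (b + r * sin t) ^ 2))
      (r * sin (arctan ((b + r * sin x) / (a + r * cos x)) - x)) x := by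
  have hu' : HasDerivAt (fun t => a + r * cos t) (r * -sin x) x :=
    ((hasDerivAt_cos x).const_mul r).const_add a
  have hv' : HasDerivAt (fun t => b + r * sin t) (r * cos x) x :=
    ((hasDerivAt_sin x).const_mul r).const_add b
  refine (((hu'.fun_pow 2).fun_add (hv'.fun_pow 2)).sqrt (by positivity)).congr_deriv ?_
  rw [sin_sub, sin_arctan_div _ h, cos_arctan_div _ h]
  field_simp
  ring

lemma hasDerivAt_arcsin_const_div {L : ℝ → ℝ} {L' c x : ℝ} (hL : HasDerivAt L L' x)
    (hc : |c| < L x) :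
    HasDerivAt (fun t => arcsin (c / L t)) (-tan (arcsin (c / L x)) * (L' / L x)) x := by
  have hL0 : 0 < L x := (abs_nonneg c).trans_lt hc
  have hy : |c / L x| < 1 := by rwa [abs_div, abs_of_pos hL0, div_lt_one hL0]
  obtain ⟨hy₁, hy₂⟩ := abs_lt.mp hy
  refine ((hasDerivAt_arcsin hy₁.ne' hy₂.ne).comp x
    ((hasDerivAt_const x c).div hL hL0.ne')).congr_deriv ?_
  rw [tan_arcsin]
  field_simp
  ring

theorem stmt_6 (c_x c_y ρ α : ℝ) (hρ : 0 < ρ)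
    (L : ℝ → ℝ)
    (hL : L = fun α => Real.sqrt ((c_x + 2 * ρ * Real.cos α) ^ 2 + (c_y + 2 * ρ * Real.sin α + ρ) ^ 2))
    (ψ₁ : ℝ → ℝ)
    (hψ₁ : ψ₁ = fun α => Real.arctan ((c_y + 2 * ρ * Real.sin α + ρ) / (c_x + 2 * ρ * Real.cos α)))
    (ψ₂ : ℝ → ℝ)
    (hψ₂ : ψ₂ = fun α => Real.arcsin (2 * ρ / L α))
    (hnbhd : ∃ ε > 0, ∀ x, |x - α| < ε → 2 * ρ < L x)
    (hden : 0 < c_x + 2 * ρ * Real.cos α) :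
    HasDerivAt ψ₂ (-Real.tan (ψ₂ α) * Real.sin (ψ₂ α) * Real.sin (ψ₁ α - α)) α := by
  obtain ⟨ε, hε, hball⟩ := hnbhd
  have h2ρ : 0 < 2 * ρ := by positivity
  have hLα : 2 * ρ < L α := hball α (by simpa using hε)
  have hL' : HasDerivAt L (2 * ρ * sin (ψ₁ α - α)) α := by
    have hshift : ∀ t, c_y + 2 * ρ * sin t + ρ = (c_y + ρ) + 2 * ρ * sin t := fun t => by ring
    simp only [hL, hψ₁, hshift]
    exact hasDerivAt_sqrt_circle c_x (c_y + ρ) (2 * ρ) α hden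
  have hsin : sin (ψ₂ α) = 2 * ρ / L α := by
    rw [hψ₂, sin_arcsin (by linarith [div_pos h2ρ (h2ρ.trans hLα)])
      ((div_le_one (h2ρ.trans hLα)).mpr hLα.le)]
  subst hψ₂
  refine (hasDerivAt_arcsin_const_div hL' (by rwa [abs_of_pos h2ρ])).congr_deriv ?_
  rw [hsin]
  ring
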